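/- There exist matrices W₁, W₂, W₃ ∈ ℝ^{1×3}, each with spectral norm ‖W_i‖₂ ≤ 1, such that, defining Φ_i : ℝ³ → ℝ³ by Φ_i(x) = x − 2 W_iᵀ ReLU(W_i x), the composition satisfies (Φ₃ ∘ Φ₂ ∘ Φ₁)(x) = (max{x₁,x₂,x₃}, median{x₁,x₂,x₃}, min{x₁,x₂,x₃}) for all x ∈ ℝ³, i.e. it sorts the three coordinates of any input in descending order. In particular, the full-sort map GroupSort(·;3) on ℝ³ is a composition of three maps in E_{3,σ} with σ = ReLU. -/

import Mathlib

/-!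
A residual ReLU layer `x ↦ x - 2 wᵀ relu(w x)` with the unit row vector `w = (e_j - e_i)/√2` is
a comparator: because `2 (1/√2)² = 1` it adds `relu(x_j - x_i)` to `x_i` and subtracts it from
`x_j`, leaving `max(x_i, x_j)` in position `i` and `min(x_i, x_j)` in position `j`. The
comparators on the pairs `(0,1)`, `(1,2)`, `(0,1)` form a sorting network on three inputs
(bubble sort): the first two carry the minimum to position `2`, the last one orders the two
remaining entries.
-/

open scoped BigOperators

noncomputable section

def relu (t : ℝ) : ℝ := max t 0

def entrywise {n : ℕ} (σ : ℝ → ℝ) (x : EuclideanSpace ℝ (Fin n)) : EuclideanSpace ℝ (Fin n) :=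
  WithLp.toLp 2 (fun i => σ (x i))

def matVec {k h : ℕ} (W : Matrix (Fin k) (Fin h) ℝ) (x : EuclideanSpace ℝ (Fin h)) :
    EuclideanSpace ℝ (Fin k) :=
  Matrix.toEuclideanLin W x

/-- Spectral norm of a real matrix, as the operator norm between Euclidean spaces. -/
def specNorm {k h : ℕ} (W : Matrix (Fin k) (Fin h) ℝ) : ℝ :=
  ‖LinearMap.toContinuousLinearMap (Matrix.toEuclideanLin W)‖

/-- Membership in `E_{h,σ}` with `σ = ReLU`. -/
def IsEulerStep {h : ℕ} (Φ : EuclideanSpace ℝ (Fin h) → EuclideanSpace ℝ (Fin h)) : Prop :=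
  ∃ (k : ℕ) (W : Matrix (Fin k) (Fin h) ℝ) (b : EuclideanSpace ℝ (Fin k)) (τ : ℝ),
    0 ≤ τ ∧ τ ≤ 2 ∧ specNorm W ≤ 1 ∧
    ∀ x, Φ x = x - τ • matVec W.transpose (entrywise relu (matVec W x + b))

def compChain {α : Type*} : (L : ℕ) → (Fin L → α → α) → α → α
  | 0, _, x => x
  | L + 1, Φ, x => Φ (Fin.last L) (compChain L (fun i => Φ i.castSucc) x)

/-- Membership in `G_{d,σ}(X,ℝ)` with `σ = ReLU`. -/
def InG {d : ℕ} (X : Set (EuclideanSpace ℝ (Fin d))) (g : EuclideanSpace ℝ (Fin d) → ℝ) : Prop :=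
  LipschitzOnWith 1 g X ∧
  ∃ (h L : ℕ) (Qhat : Matrix (Fin h) (Fin d) ℝ) (qhat : EuclideanSpace ℝ (Fin h))
    (Φ : Fin L → (EuclideanSpace ℝ (Fin h) → EuclideanSpace ℝ (Fin h)))
    (v : EuclideanSpace ℝ (Fin h)),
    (∀ ℓ, IsEulerStep (Φ ℓ)) ∧ ‖v‖ = 1 ∧
    ∀ x ∈ X, g x = ∑ i, v i * compChain L Φ (matVec Qhat x + qhat) i

def concatE {h₁ h₂ : ℕ} (u : EuclideanSpace ℝ (Fin h₁)) (v : EuclideanSpace ℝ (Fin h₂)) :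
    EuclideanSpace ℝ (Fin (h₁ + h₂)) :=
  WithLp.toLp 2 (Fin.append (fun i => u i) (fun i => v i))

/-- The residual blocks in `Ẽ_{h,σ}`: `(max{x₁,x₂}, min{x₁,x₂}, x₃, Φ'(x₄,…,x_{h+3}))`. -/
def tildeLayer {h : ℕ} (Φ' : EuclideanSpace ℝ (Fin h) → EuclideanSpace ℝ (Fin h))
    (x : EuclideanSpace ℝ (Fin (h + 3))) : EuclideanSpace ℝ (Fin (h + 3)) :=
  WithLp.toLp 2 (fun j : Fin (h + 3) =>
    if _h0 : (j : ℕ) = 0 then max (x ⟨0, by omega⟩) (x ⟨1, by omega⟩)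
    else if _h1 : (j : ℕ) = 1 then min (x ⟨0, by omega⟩) (x ⟨1, by omega⟩)
    else if _h2 : (j : ℕ) = 2 then x ⟨2, by omega⟩
    else Φ' (WithLp.toLp 2 (fun i : Fin h => x ⟨(i : ℕ) + 3, by have := i.isLt; omega⟩))
      ⟨(j : ℕ) - 3, by have := j.isLt; omega⟩)

/-- Membership in `Ẽ_{h,σ}` with `σ = ReLU`. -/
def IsTildeLayer {h : ℕ} (Φ : EuclideanSpace ℝ (Fin (h + 3)) → EuclideanSpace ℝ (Fin (h + 3))) :
    Prop :=
  ∃ Φ', IsEulerStep Φ' ∧ ∀ x, Φ x = tildeLayer Φ' x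

def emb0 {n : ℕ} : Fin 1 → Fin (n + 3) := fun _ => ⟨0, by omega⟩
def emb1 {n : ℕ} : Fin 1 → Fin (n + 3) := fun _ => ⟨1, by omega⟩
def emb2 {n : ℕ} : Fin 1 → Fin (n + 3) := fun _ => ⟨2, by omega⟩
def embT {n : ℕ} : Fin n → Fin (n + 3) := fun i => ⟨(i : ℕ) + 3, by have := i.isLt; omega⟩

/-- Membership in `R_{d,m}` for `m = (1,1,1,n)`: each block row of the matrix has spectral
norm at most `1`. -/
def memRm {d n : ℕ} (Q : Matrix (Fin (n + 3)) (Fin d) ℝ) : Prop :=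
  specNorm (Q.submatrix emb0 id) ≤ 1 ∧ specNorm (Q.submatrix emb1 id) ≤ 1 ∧
    specNorm (Q.submatrix emb2 id) ≤ 1 ∧ specNorm (Q.submatrix embT id) ≤ 1

def rowBlockSum {n r : ℕ} (A : Matrix (Fin (n + 3)) (Fin (n + 3)) ℝ)
    (e : Fin r → Fin (n + 3)) : ℝ :=
  specNorm (A.submatrix e emb0) + specNorm (A.submatrix e emb1) +
    specNorm (A.submatrix e emb2) + specNorm (A.submatrix e embT)

/-- Membership in `L_m` for `m = (1,1,1,n)`: for each block row, the sum of the spectral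
norms of the blocks is at most `1`. -/
def memLm {n : ℕ} (A : Matrix (Fin (n + 3)) (Fin (n + 3)) ℝ) : Prop :=
  rowBlockSum A emb0 ≤ 1 ∧ rowBlockSum A emb1 ≤ 1 ∧
    rowBlockSum A emb2 ≤ 1 ∧ rowBlockSum A embT ≤ 1

/-- `Φ_{L+1} ∘ A_L ∘ ⋯ ∘ Φ₂ ∘ A₁ ∘ Φ₁`, the alternating composition. -/
def altChain {α : Type*} : (L : ℕ) → (Fin (L + 1) → α → α) → (Fin L → α → α) → α → α
  | 0, Φ, _, x => Φ 0 x
  | L + 1, Φ, A, x =>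
      Φ (Fin.last (L + 1)) (A (Fin.last L)
        (altChain L (fun i => Φ i.castSucc) (fun i => A i.castSucc) x))

/-- Membership in the fixed-width class `tilde-G_{d,σ,n+3}(X,ℝ)` with `σ = ReLU`. -/
def InTildeG {d n : ℕ} (X : Set (EuclideanSpace ℝ (Fin d)))
    (g : EuclideanSpace ℝ (Fin d) → ℝ) : Prop :=
  ∃ (L : ℕ) (Qhat : Matrix (Fin (n + 3)) (Fin d) ℝ) (qhat : EuclideanSpace ℝ (Fin (n + 3)))
    (Φ : Fin (L + 1) → (EuclideanSpace ℝ (Fin (n + 3)) → EuclideanSpace ℝ (Fin (n + 3))))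
    (Ahat : Fin L → Matrix (Fin (n + 3)) (Fin (n + 3)) ℝ)
    (ahat : Fin L → EuclideanSpace ℝ (Fin (n + 3)))
    (v : EuclideanSpace ℝ (Fin (n + 3))),
    memRm Qhat ∧ (∀ ℓ, IsTildeLayer (Φ ℓ)) ∧ (∀ ℓ, memLm (Ahat ℓ)) ∧ (∑ i, |v i|) ≤ 1 ∧
    ∀ x ∈ X,
      g x = ∑ i, v i *
        altChain L Φ (fun ℓ u => matVec (Ahat ℓ) u + ahat ℓ) (matVec Qhat x + qhat) i

end

open Matrix
open scoped RealInnerProductSpace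

noncomputable section

variable {n : ℕ}

lemma matVec_apply {k : ℕ} (W : Matrix (Fin k) (Fin n) ℝ) (x : EuclideanSpace ℝ (Fin n))
    (i : Fin k) : matVec W x i = ∑ j, W i j * x j := rfl

lemma matVec_replicateRow (w x : EuclideanSpace ℝ (Fin n)) :
    matVec (replicateRow (Fin 1) w) x 0 = ⟪w, x⟫ := by
  simp [matVec_apply, PiLp.inner_apply, mul_comm]

lemma matVec_transpose_replicateRow (w : EuclideanSpace ℝ (Fin n))
    (y : EuclideanSpace ℝ (Fin 1)) : matVec (replicateRow (Fin 1) w)ᵀ y = y 0 • w := by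
  ext k
  simp [matVec_apply, mul_comm]

lemma specNorm_replicateRow_le (w : EuclideanSpace ℝ (Fin n)) :
    specNorm (replicateRow (Fin 1) w) ≤ ‖w‖ := by
  refine ContinuousLinearMap.opNorm_le_bound _ (norm_nonneg w) fun x => ?_
  have hnorm : ‖matVec (replicateRow (Fin 1) w) x‖ = |⟪w, x⟫| := by
    rw [EuclideanSpace.norm_eq, Fin.sum_univ_one, matVec_replicateRow, Real.norm_eq_abs,
      sq_abs, Real.sqrt_sq_eq_abs]
  exact hnorm.trans_le (abs_real_inner_le_norm w x)

lemma residual_replicateRow (τ : ℝ) (w x : EuclideanSpace ℝ (Fin n)) :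
    x - τ • matVec (replicateRow (Fin 1) w)ᵀ (entrywise relu (matVec (replicateRow (Fin 1) w) x))
      = x - (τ * relu ⟪w, x⟫) • w := by
  rw [matVec_transpose_replicateRow, entrywise, PiLp.toLp_apply, matVec_replicateRow, mul_smul]

lemma isEulerStep_residual {k : ℕ} {W : Matrix (Fin k) (Fin n) ℝ} {τ : ℝ} (hτ₀ : 0 ≤ τ)
    (hτ₂ : τ ≤ 2) (hW : specNorm W ≤ 1) :
    IsEulerStep fun x => x - τ • matVec Wᵀ (entrywise relu (matVec W x)) :=
  ⟨k, W, 0, τ, hτ₀, hτ₂, hW, fun x => by rw [add_zero]⟩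

lemma add_relu_sub_eq_max (a b : ℝ) : a + relu (b - a) = max a b := by
  rw [relu, ← max_add_add_left, add_sub_cancel, add_zero, max_comm]

lemma sub_relu_sub_eq_min (a b : ℝ) : b - relu (b - a) = min a b := by
  rw [relu, ← min_sub_sub_left, sub_sub_cancel, sub_zero]

def compareSwap (i j : Fin n) (x : EuclideanSpace ℝ (Fin n)) : EuclideanSpace ℝ (Fin n) :=
  x - relu (x j - x i) • (EuclideanSpace.single j 1 - EuclideanSpace.single i 1)

lemma compareSwap_apply_left {i j : Fin n} (hij : i ≠ j) (x : EuclideanSpace ℝ (Fin n)) :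
    compareSwap i j x i = max (x i) (x j) := by
  simpa [compareSwap, hij.symm] using add_relu_sub_eq_max (x i) (x j)

lemma compareSwap_apply_right {i j : Fin n} (hij : i ≠ j) (x : EuclideanSpace ℝ (Fin n)) :
    compareSwap i j x j = min (x i) (x j) := by
  simpa [compareSwap, hij] using sub_relu_sub_eq_min (x i) (x j)

lemma compareSwap_apply_of_ne {i j k : Fin n} (hki : k ≠ i) (hkj : k ≠ j)
    (x : EuclideanSpace ℝ (Fin n)) : compareSwap i j x k = x k := by
  simp [compareSwap, hki, hkj]

def compareSwapMatrix (i j : Fin n) : Matrix (Fin 1) (Fin n) ℝ :=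
  replicateRow (Fin 1) ((√2)⁻¹ • (EuclideanSpace.single j 1 - EuclideanSpace.single i 1) :
    EuclideanSpace ℝ (Fin n))

lemma norm_single_sub_single {i j : Fin n} (hij : i ≠ j) :
    ‖EuclideanSpace.single j (1 : ℝ) - EuclideanSpace.single i 1‖ = √2 := by
  rw [← Real.sqrt_sq (norm_nonneg _), norm_sub_sq_real, EuclideanSpace.inner_single_left]
  norm_num [hij]

lemma specNorm_compareSwapMatrix_le {i j : Fin n} (hij : i ≠ j) :
    specNorm (compareSwapMatrix i j) ≤ 1 := by
  refine (specNorm_replicateRow_le _).trans_eq ?_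
  rw [norm_smul, norm_single_sub_single hij, norm_inv, Real.norm_eq_abs,
    abs_of_pos (by positivity), inv_mul_cancel₀ (by positivity)]

lemma residual_compareSwapMatrix (i j : Fin n) (x : EuclideanSpace ℝ (Fin n)) :
    x - (2 : ℝ) • matVec (compareSwapMatrix i j)ᵀ
        (entrywise relu (matVec (compareSwapMatrix i j) x)) = compareSwap i j x := by
  have hinner : ⟪(√2)⁻¹ • (EuclideanSpace.single j 1 - EuclideanSpace.single i 1), x⟫ =
      (√2)⁻¹ * (x j - x i) := by
    simp [inner_smul_left, inner_sub_left, EuclideanSpace.inner_single_left]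
  have hrelu : relu ((√2)⁻¹ * (x j - x i)) = (√2)⁻¹ * relu (x j - x i) := by
    rw [relu, relu, mul_max_of_nonneg _ _ (by positivity), mul_zero]
  have htwo : (2 : ℝ) * (√2)⁻¹ * (√2)⁻¹ = 1 := by
    field_simp
    simp
  rw [compareSwapMatrix, residual_replicateRow, hinner, hrelu, compareSwap, smul_smul]
  congr 2
  linear_combination relu (x j - x i) * htwo

lemma compareSwap_sort_three (x : EuclideanSpace ℝ (Fin 3)) :
    ⇑(compareSwap 0 1 (compareSwap 1 2 (compareSwap 0 1 x))) =
      fun i : Fin 3 =>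
        if i = 0 then max (x 0) (max (x 1) (x 2))
        else if i = 1 then max (min (x 0) (x 1)) (min (x 2) (max (x 0) (x 1)))
        else min (x 0) (min (x 1) (x 2)) := by
  have h01 : (0 : Fin 3) ≠ 1 := by decide
  have h12 : (1 : Fin 3) ≠ 2 := by decide
  have h02 : (0 : Fin 3) ≠ 2 := by decide
  funext k
  fin_cases k <;>
    simp only [Fin.isValue, Fin.zero_eta, Fin.mk_one, Fin.reduceFinMk, ne_eq, not_false_eq_true,
      h01, h02, h12, h01.symm, h02.symm, h12.symm, compareSwap_apply_left, compareSwap_apply_right,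
      compareSwap_apply_of_ne, ↓reduceIte] <;>
    grind

end

/-- Three residual layers `x ↦ x - 2 W_iᵀ ReLU(W_i x)` with `‖W_i‖₂ ≤ 1`
sort the three coordinates of any `x ∈ ℝ³` in descending order (max, median, min); in
particular each layer lies in `E_{3,ReLU}`, so `GroupSort(·;3)` is a composition of three
maps in `E_{3,ReLU}`. -/
theorem stmt17 :
    ∃ W₁ W₂ W₃ : Matrix (Fin 1) (Fin 3) ℝ,
      specNorm W₁ ≤ 1 ∧ specNorm W₂ ≤ 1 ∧ specNorm W₃ ≤ 1 ∧
      IsEulerStep (fun x : EuclideanSpace ℝ (Fin 3) =>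
        x - (2 : ℝ) • matVec W₁.transpose (entrywise relu (matVec W₁ x))) ∧
      IsEulerStep (fun x : EuclideanSpace ℝ (Fin 3) =>
        x - (2 : ℝ) • matVec W₂.transpose (entrywise relu (matVec W₂ x))) ∧
      IsEulerStep (fun x : EuclideanSpace ℝ (Fin 3) =>
        x - (2 : ℝ) • matVec W₃.transpose (entrywise relu (matVec W₃ x))) ∧
      ∀ x : EuclideanSpace ℝ (Fin 3),
        (fun y : EuclideanSpace ℝ (Fin 3) =>
            y - (2 : ℝ) • matVec W₃.transpose (entrywise relu (matVec W₃ y)))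
          ((fun y : EuclideanSpace ℝ (Fin 3) =>
            y - (2 : ℝ) • matVec W₂.transpose (entrywise relu (matVec W₂ y)))
          ((fun y : EuclideanSpace ℝ (Fin 3) =>
            y - (2 : ℝ) • matVec W₁.transpose (entrywise relu (matVec W₁ y))) x)) =
          (fun i : Fin 3 =>
            if i = 0 then max (x 0) (max (x 1) (x 2))
            else if i = 1 then max (min (x 0) (x 1)) (min (x 2) (max (x 0) (x 1)))
            else min (x 0) (min (x 1) (x 2))) := by
  have h01 : (0 : Fin 3) ≠ 1 := by decide
  have h12 : (1 : Fin 3) ≠ 2 := by decide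
  refine ⟨compareSwapMatrix 0 1, compareSwapMatrix 1 2, compareSwapMatrix 0 1,
    specNorm_compareSwapMatrix_le h01, specNorm_compareSwapMatrix_le h12,
    specNorm_compareSwapMatrix_le h01,
    isEulerStep_residual zero_le_two le_rfl (specNorm_compareSwapMatrix_le h01),
    isEulerStep_residual zero_le_two le_rfl (specNorm_compareSwapMatrix_le h12),
    isEulerStep_residual zero_le_two le_rfl (specNorm_compareSwapMatrix_le h01), fun x => ?_⟩
  simp only [residual_compareSwapMatrix]
  exact compareSwap_sort_three x
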